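/- arXiv:2408.11104 — 5 statements merged into one kernel-verified Lean document; each statement's English description precedes it below -/
import Mathlib

section
/- Let g₁, g₂ be nonzero vectors in a real inner product space, and let g_PCGrad = O(g₁,g₂) + O(g₂,g₁) where O(u,v) = v - (⟪u,v⟫/‖u‖²)·u. Then ⟪g_PCGrad, g₁⟫ ≥ 0 and ⟪g_PCGrad, g₂⟫ ≥ 0; i.e. the two-loss PCGrad update is conflict-free. -/
/-!
`O(u, v) = orthComponent u v` is the projection of `v` onto `(ℝ ∙ u)ᗮ`. Hence `O(g₁, g₂)` is
orthogonal to `g₁`, and `⟪O(g₂, g₁), g₁⟫ = ‖O(g₂, g₁)‖² ≥ 0` because `g₁ - O(g₂, g₁)` is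
orthogonal to `O(g₂, g₁)`.
-/

open scoped RealInnerProductSpace

section OrthComponent

variable {E : Type*} [NormedAddCommGroup E] [InnerProductSpace ℝ E]

noncomputable def orthComponent (u v : E) : E := v - (⟪u, v⟫ / ‖u‖ ^ 2) • u

theorem orthComponent_eq_starProjection (u v : E) :
    orthComponent u v = (ℝ ∙ u)ᗮ.starProjection v := by
  rw [Submodule.starProjection_orthogonal_val, Submodule.starProjection_singleton]
  rfl

theorem inner_orthComponent_self (u v : E) : ⟪orthComponent u v, u⟫ = 0 := by
  rw [orthComponent_eq_starProjection]
  exact Submodule.inner_left_of_mem_orthogonal (Submodule.mem_span_singleton_self u)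
    (Submodule.starProjection_apply_mem _ v)

theorem inner_orthComponent_nonneg (u v : E) : 0 ≤ ⟪orthComponent u v, v⟫ := by
  rw [orthComponent_eq_starProjection]
  exact (ℝ ∙ u)ᗮ.re_inner_starProjection_nonneg v

end OrthComponent

theorem stmt_2_general {E : Type*} [NormedAddCommGroup E] [InnerProductSpace ℝ E]
    (g₁ g₂ : E) :
    0 ≤ ⟪(g₂ - (⟪g₁, g₂⟫ / ‖g₁‖ ^ 2) • g₁) + (g₁ - (⟪g₂, g₁⟫ / ‖g₂‖ ^ 2) • g₂), g₁⟫ ∧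
    0 ≤ ⟪(g₂ - (⟪g₁, g₂⟫ / ‖g₁‖ ^ 2) • g₁) + (g₁ - (⟪g₂, g₁⟫ / ‖g₂‖ ^ 2) • g₂), g₂⟫ := by
  change 0 ≤ ⟪orthComponent g₁ g₂ + orthComponent g₂ g₁, g₁⟫ ∧
    0 ≤ ⟪orthComponent g₁ g₂ + orthComponent g₂ g₁, g₂⟫
  rw [inner_add_left, inner_add_left, inner_orthComponent_self, inner_orthComponent_self,
    zero_add, add_zero]
  exact ⟨inner_orthComponent_nonneg g₂ g₁, inner_orthComponent_nonneg g₁ g₂⟩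

theorem stmt_2 {E : Type*} [NormedAddCommGroup E] [InnerProductSpace ℝ E]
    (g₁ g₂ : E) (h₁ : g₁ ≠ 0) (h₂ : g₂ ≠ 0) :
    0 ≤ ⟪(g₂ - (⟪g₁, g₂⟫ / ‖g₁‖ ^ 2) • g₁) + (g₁ - (⟪g₂, g₁⟫ / ‖g₂‖ ^ 2) • g₂), g₁⟫ ∧
    0 ≤ ⟪(g₂ - (⟪g₁, g₂⟫ / ‖g₁‖ ^ 2) • g₁) + (g₁ - (⟪g₂, g₁⟫ / ‖g₂‖ ^ 2) • g₂), g₂⟫ :=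
  stmt_2_general g₁ g₂
end

section
/- Let g₁, g₂ be nonzero, non-parallel vectors in a real inner product space, U(v) = v/‖v‖, O(u,v) = v - (⟪u,v⟫/‖u‖²)·u, and g_v = U(O(g₁,g₂)) + U(O(g₂,g₁)). Then ⟪U(g₁), g_v⟫ = ⟪U(g₂), g_v⟫ = √(1 - S_c(g₁,g₂)²) > 0. In particular g_v has equal, strictly positive projection length onto both unit vectors U(g₁) and U(g₂). -/
/-!
`O u v` is the component of `v` orthogonal to `u`, so `⟪U u, U (O u v)⟫ = 0` and
`⟪U v, U (O u v)⟫ = ‖O u v‖ / ‖v‖`. By Pythagoras `‖O u v‖² = ‖v‖² (1 - S_c(u, v)²)`, so this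
ratio is `√(1 - S_c(u, v)²)`, which is symmetric in `u, v`; it is positive because `O u v ≠ 0`
for independent `u, v`.
-/

open scoped RealInnerProductSpace
open NormedSpace

namespace InnerProductGeometry

variable {E : Type*} [NormedAddCommGroup E] [InnerProductSpace ℝ E]

noncomputable def orthComponent (u v : E) : E := v - (⟪u, v⟫ / ‖u‖ ^ 2) • u

noncomputable def orthBisector (u v : E) : E :=
  normalize (orthComponent u v) + normalize (orthComponent v u)

theorem orthBisector_comm (u v : E) : orthBisector u v = orthBisector v u :=
  add_comm _ _

theorem inner_orthComponent_left (u v : E) : ⟪u, orthComponent u v⟫ = 0 := by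
  rcases eq_or_ne u 0 with rfl | hu
  · exact inner_zero_left _
  have : ‖u‖ ≠ 0 := norm_ne_zero_iff.mpr hu
  rw [orthComponent, inner_sub_right, real_inner_smul_right, real_inner_self_eq_norm_sq]
  field_simp
  ring

theorem inner_orthComponent_right (u v : E) :
    ⟪v, orthComponent u v⟫ = ‖orthComponent u v‖ ^ 2 := by
  rw [← real_inner_self_eq_norm_sq]
  conv_rhs => rw [orthComponent, inner_sub_left, real_inner_smul_left]
  rw [← orthComponent, inner_orthComponent_left, mul_zero, sub_zero]

theorem norm_orthComponent_sq (u v : E) :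
    ‖orthComponent u v‖ ^ 2 = ‖v‖ ^ 2 - ⟪u, v⟫ ^ 2 / ‖u‖ ^ 2 := by
  rw [← inner_orthComponent_right, orthComponent, inner_sub_right, real_inner_smul_right,
    real_inner_self_eq_norm_sq, real_inner_comm u v]
  ring

theorem orthComponent_ne_zero {u v : E} (h : LinearIndependent ℝ ![u, v]) :
    orthComponent u v ≠ 0 := by
  intro h0
  have := LinearIndependent.pair_iff.mp h (-(⟪u, v⟫ / ‖u‖ ^ 2)) 1
    (by rw [← h0, orthComponent, neg_smul, one_smul, sub_eq_neg_add])
  exact one_ne_zero this.2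

theorem norm_orthComponent_div_norm {v : E} (u : E) (hv : v ≠ 0) :
    ‖orthComponent u v‖ / ‖v‖ = √(1 - (⟪u, v⟫ / (‖u‖ * ‖v‖)) ^ 2) := by
  have : ‖v‖ ≠ 0 := norm_ne_zero_iff.mpr hv
  rw [← Real.sqrt_sq (by positivity : 0 ≤ ‖orthComponent u v‖ / ‖v‖), div_pow,
    norm_orthComponent_sq]
  congr 1
  field_simp

theorem sqrt_one_sub_sq_inner_div_pos {u v : E} (h : LinearIndependent ℝ ![u, v]) :
    0 < √(1 - (⟪u, v⟫ / (‖u‖ * ‖v‖)) ^ 2) := by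
  have hv : v ≠ 0 := h.ne_zero 1
  rw [← norm_orthComponent_div_norm u hv]
  have := norm_pos_iff.mpr (orthComponent_ne_zero h)
  have := norm_pos_iff.mpr hv
  positivity

theorem inner_normalize_normalize_orthComponent_left (u v : E) :
    ⟪normalize u, normalize (orthComponent u v)⟫ = 0 := by
  rw [NormedSpace.normalize, NormedSpace.normalize, real_inner_smul_left, real_inner_smul_right,
    inner_orthComponent_left, mul_zero, mul_zero]

theorem inner_normalize_normalize_orthComponent_right (u v : E) :
    ⟪normalize v, normalize (orthComponent u v)⟫ = ‖orthComponent u v‖ / ‖v‖ := by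
  rw [NormedSpace.normalize, NormedSpace.normalize, real_inner_smul_left, real_inner_smul_right,
    inner_orthComponent_right]
  rcases eq_or_ne ‖orthComponent u v‖ 0 with h0 | h0
  · simp [h0]
  · field_simp

theorem inner_normalize_left_orthBisector {u : E} (v : E) (hu : u ≠ 0) :
    ⟪normalize u, orthBisector u v⟫ = √(1 - (⟪u, v⟫ / (‖u‖ * ‖v‖)) ^ 2) := by
  rw [orthBisector, inner_add_right, inner_normalize_normalize_orthComponent_left,
    inner_normalize_normalize_orthComponent_right, norm_orthComponent_div_norm v hu,
    real_inner_comm, mul_comm, zero_add]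

theorem inner_normalize_right_orthBisector {v : E} (u : E) (hv : v ≠ 0) :
    ⟪normalize v, orthBisector u v⟫ = √(1 - (⟪u, v⟫ / (‖u‖ * ‖v‖)) ^ 2) := by
  rw [orthBisector_comm, inner_normalize_left_orthBisector u hv, real_inner_comm, mul_comm]

end InnerProductGeometry

open InnerProductGeometry in
theorem stmt_5_general {E : Type*} [NormedAddCommGroup E] [InnerProductSpace ℝ E]
    (g₁ g₂ : E)
    (hli : LinearIndependent ℝ ![g₁, g₂]) :
    let O : E → E → E := fun u v => v - (⟪u, v⟫ / ‖u‖ ^ 2) • u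
    let U : E → E := fun v => ‖v‖⁻¹ • v
    let gv : E := U (O g₁ g₂) + U (O g₂ g₁)
    ⟪U g₁, gv⟫ = Real.sqrt (1 - (⟪g₁, g₂⟫ / (‖g₁‖ * ‖g₂‖)) ^ 2) ∧
    ⟪U g₂, gv⟫ = Real.sqrt (1 - (⟪g₁, g₂⟫ / (‖g₁‖ * ‖g₂‖)) ^ 2) ∧
    0 < Real.sqrt (1 - (⟪g₁, g₂⟫ / (‖g₁‖ * ‖g₂‖)) ^ 2) :=
  ⟨inner_normalize_left_orthBisector g₂ (hli.ne_zero 0),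
    inner_normalize_right_orthBisector g₁ (hli.ne_zero 1),
    sqrt_one_sub_sq_inner_div_pos hli⟩

theorem stmt_5 {E : Type*} [NormedAddCommGroup E] [InnerProductSpace ℝ E]
    (g₁ g₂ : E) (h₁ : g₁ ≠ 0) (h₂ : g₂ ≠ 0)
    (hli : LinearIndependent ℝ ![g₁, g₂]) :
    let O : E → E → E := fun u v => v - (⟪u, v⟫ / ‖u‖ ^ 2) • u
    let U : E → E := fun v => ‖v‖⁻¹ • v
    let gv : E := U (O g₁ g₂) + U (O g₂ g₁)
    ⟪U g₁, gv⟫ = Real.sqrt (1 - (⟪g₁, g₂⟫ / (‖g₁‖ * ‖g₂‖)) ^ 2) ∧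
    ⟪U g₂, gv⟫ = Real.sqrt (1 - (⟪g₁, g₂⟫ / (‖g₁‖ * ‖g₂‖)) ^ 2) ∧
    0 < Real.sqrt (1 - (⟪g₁, g₂⟫ / (‖g₁‖ * ‖g₂‖)) ^ 2) :=
  stmt_5_general g₁ g₂ hli
end

section
/- Let g₁, g₂ be nonzero vectors in a real inner product space with ⟪g_PCGrad, U(g₂)⟫ ≠ 0, where g_PCGrad = O(g₁,g₂) + O(g₂,g₁) and U is normalization. Then ⟪g_PCGrad, U(g₁)⟫ / ⟪g_PCGrad, U(g₂)⟫ = ‖g₁‖/‖g₂‖; i.e. the PCGrad update's projection lengths onto the loss-specific gradients are proportional to their magnitudes. -/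
open scoped RealInnerProductSpace

theorem stmt_6 {E : Type*} [NormedAddCommGroup E] [InnerProductSpace ℝ E]
    (g₁ g₂ : E) (h₁ : g₁ ≠ 0) (h₂ : g₂ ≠ 0)
    (gPC : E)
    (hPC : gPC = (g₂ - (⟪g₁, g₂⟫ / ‖g₁‖ ^ 2) • g₁) + (g₁ - (⟪g₂, g₁⟫ / ‖g₂‖ ^ 2) • g₂))
    (hne : ⟪gPC, ‖g₂‖⁻¹ • g₂⟫ ≠ 0) :
    ⟪gPC, ‖g₁‖⁻¹ • g₁⟫ / ⟪gPC, ‖g₂‖⁻¹ • g₂⟫ = ‖g₁‖ / ‖g₂‖ := by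
  have hn1 : ‖g₁‖ ≠ 0 := norm_ne_zero_iff.mpr h₁
  have hn2 : ‖g₂‖ ≠ 0 := norm_ne_zero_iff.mpr h₂
  set a : ℝ := ⟪g₁, g₂⟫ with ha
  have hcomm : ⟪g₂, g₁⟫ = a := real_inner_comm g₁ g₂
  have e1 : ⟪gPC, g₁⟫ = (‖g₁‖ ^ 2 * ‖g₂‖ ^ 2 - a ^ 2) / ‖g₂‖ ^ 2 := by
    subst hPC
    simp only [inner_add_left, inner_sub_left, real_inner_smul_left,
      real_inner_self_eq_norm_sq, hcomm, ← ha]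
    field_simp
    ring
  have e2 : ⟪gPC, g₂⟫ = (‖g₁‖ ^ 2 * ‖g₂‖ ^ 2 - a ^ 2) / ‖g₁‖ ^ 2 := by
    subst hPC
    simp only [inner_add_left, inner_sub_left, real_inner_smul_left,
      real_inner_self_eq_norm_sq, hcomm, ← ha]
    field_simp
    ring
  rw [real_inner_smul_right, real_inner_smul_right, e1, e2]
  rw [real_inner_smul_right, e2] at hne
  have hD : ‖g₁‖ ^ 2 * ‖g₂‖ ^ 2 - a ^ 2 ≠ 0 := by
    intro h
    apply hne
    rw [h]
    simp
  field_simp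
end

section
/- Let g₁, g₂ be nonzero vectors in a real inner product space, α₁ = ‖g₂‖/(‖g₁‖+‖g₂‖), α₂ = ‖g₁‖/(‖g₁‖+‖g₂‖), and g_IMTL = α₁g₁ + α₂g₂. Then g_IMTL = (‖g₁‖‖g₂‖/(‖g₁‖+‖g₂‖))·(U(g₁) + U(g₂)), and ⟪g_IMTL, U(g₁)⟫ = ⟪g_IMTL, U(g₂)⟫ = (‖g₁‖‖g₂‖/(‖g₁‖+‖g₂‖))·(1 + S_c(g₁,g₂)) ≥ 0. -/
open scoped RealInnerProductSpace

theorem stmt_12 {E : Type*} [NormedAddCommGroup E] [InnerProductSpace ℝ E]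
    (g₁ g₂ : E) (h₁ : g₁ ≠ 0) (h₂ : g₂ ≠ 0) :
    let gI : E := (‖g₂‖ / (‖g₁‖ + ‖g₂‖)) • g₁ + (‖g₁‖ / (‖g₁‖ + ‖g₂‖)) • g₂
    gI = (‖g₁‖ * ‖g₂‖ / (‖g₁‖ + ‖g₂‖)) • (‖g₁‖⁻¹ • g₁ + ‖g₂‖⁻¹ • g₂) ∧
    ⟪gI, ‖g₁‖⁻¹ • g₁⟫ =
      (‖g₁‖ * ‖g₂‖ / (‖g₁‖ + ‖g₂‖)) * (1 + ⟪g₁, g₂⟫ / (‖g₁‖ * ‖g₂‖)) ∧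
    ⟪gI, ‖g₂‖⁻¹ • g₂⟫ =
      (‖g₁‖ * ‖g₂‖ / (‖g₁‖ + ‖g₂‖)) * (1 + ⟪g₁, g₂⟫ / (‖g₁‖ * ‖g₂‖)) ∧
    0 ≤ (‖g₁‖ * ‖g₂‖ / (‖g₁‖ + ‖g₂‖)) * (1 + ⟪g₁, g₂⟫ / (‖g₁‖ * ‖g₂‖)) := by
  intro gI
  have hn1 : (0:ℝ) < ‖g₁‖ := norm_pos_iff.mpr h₁
  have hn2 : (0:ℝ) < ‖g₂‖ := norm_pos_iff.mpr h₂
  have hs : (0:ℝ) < ‖g₁‖ + ‖g₂‖ := by linarith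
  have hc1 : ‖g₁‖ * ‖g₂‖ / (‖g₁‖ + ‖g₂‖) * ‖g₁‖⁻¹ = ‖g₂‖ / (‖g₁‖ + ‖g₂‖) := by
    field_simp
  have hc2 : ‖g₁‖ * ‖g₂‖ / (‖g₁‖ + ‖g₂‖) * ‖g₂‖⁻¹ = ‖g₁‖ / (‖g₁‖ + ‖g₂‖) := by
    field_simp
  have heq : gI = (‖g₁‖ * ‖g₂‖ / (‖g₁‖ + ‖g₂‖)) • (‖g₁‖⁻¹ • g₁ + ‖g₂‖⁻¹ • g₂) := by
    simp only [gI, smul_add, smul_smul, hc1, hc2]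
  have hip : ∀ v : E, ⟪gI, v⟫ =
      (‖g₂‖ / (‖g₁‖ + ‖g₂‖)) * ⟪g₁, v⟫ + (‖g₁‖ / (‖g₁‖ + ‖g₂‖)) * ⟪g₂, v⟫ := by
    intro v
    simp [gI, inner_add_left, real_inner_smul_left]
  have h11 : ⟪g₁, g₁⟫ = ‖g₁‖ * ‖g₁‖ := real_inner_self_eq_norm_mul_norm g₁
  have h22 : ⟪g₂, g₂⟫ = ‖g₂‖ * ‖g₂‖ := real_inner_self_eq_norm_mul_norm g₂
  have h21 : ⟪g₂, g₁⟫ = ⟪g₁, g₂⟫ := real_inner_comm g₁ g₂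
  have e1 : ⟪gI, ‖g₁‖⁻¹ • g₁⟫ =
      (‖g₁‖ * ‖g₂‖ / (‖g₁‖ + ‖g₂‖)) * (1 + ⟪g₁, g₂⟫ / (‖g₁‖ * ‖g₂‖)) := by
    rw [hip]
    simp only [real_inner_smul_right, h11, h21]
    field_simp
  have e2 : ⟪gI, ‖g₂‖⁻¹ • g₂⟫ =
      (‖g₁‖ * ‖g₂‖ / (‖g₁‖ + ‖g₂‖)) * (1 + ⟪g₁, g₂⟫ / (‖g₁‖ * ‖g₂‖)) := by
    rw [hip]
    simp only [real_inner_smul_right, h22]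
    field_simp
    ring
  refine ⟨heq, e1, e2, ?_⟩
  have hcs : -(‖g₁‖ * ‖g₂‖) ≤ ⟪g₁, g₂⟫ := neg_le_of_abs_le (abs_real_inner_le_norm g₁ g₂)
  have h1 : (0:ℝ) ≤ 1 + ⟪g₁, g₂⟫ / (‖g₁‖ * ‖g₂‖) := by
    have : (-1:ℝ) ≤ ⟪g₁, g₂⟫ / (‖g₁‖ * ‖g₂‖) := by
      rw [le_div_iff₀ (by positivity)]; linarith
    linarith
  have h2 : (0:ℝ) ≤ ‖g₁‖ * ‖g₂‖ / (‖g₁‖ + ‖g₂‖) := by positivity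
  exact mul_nonneg h2 h1
end

section
/- Let g₁, g₂ be nonzero, linearly independent vectors in a real inner product space and let g_v = U(U(O(g₁,g₂)) + U(O(g₂,g₁))) be the unit ConFIG direction. Then S_c(g_v, g₁) = S_c(g_v, g₂) = √((1 + S_c(g₁,g₂))/2). -/
/-!
Everything is invariant under positive rescaling of `g₁` and `g₂`, so take them to be unit
vectors `x`, `y` with `c = ⟪x, y⟫`, where `|c| < 1` by linear independence. Then
`O(x, y) = y - c • x` and `O(y, x) = x - c • y` both have length `√(1 - c²)`, so their unit
vectors add up to a positive multiple of `(1 - c) • (x + y)`: `g_v` is the unit bisector of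
`x` and `y`. Finally `⟪x + y, x⟫ = 1 + c` and `‖x + y‖ = √(2 (1 + c))`.
-/

open scoped RealInnerProductSpace

open InnerProductGeometry NormedSpace Real

section

variable {E : Type*} [NormedAddCommGroup E] [InnerProductSpace ℝ E]

noncomputable def rejection (u v : E) : E := v - (⟪u, v⟫ / ‖u‖ ^ 2) • u

theorem real_inner_normalize_normalize (x y : E) :
    ⟪normalize x, normalize y⟫ = ⟪x, y⟫ / (‖x‖ * ‖y‖) := by
  simp only [NormedSpace.normalize, real_inner_smul_left, real_inner_smul_right]
  field_simp

theorem abs_real_inner_div_norm_mul_norm_lt_one {x y : E} (h : LinearIndependent ℝ ![x, y]) :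
    |⟪x, y⟫ / (‖x‖ * ‖y‖)| < 1 := by
  refine (abs_real_inner_div_norm_mul_norm_le_one x y).lt_of_ne fun h_eq ↦ ?_
  obtain ⟨hx, r, -, rfl⟩ := (abs_real_inner_div_norm_mul_norm_eq_one_iff x y).1 h_eq
  exact (LinearIndependent.pair_iff' hx).1 h r rfl

theorem norm_smul_rejection_normalize {u v : E} (hu : u ≠ 0) :
    ‖v‖ • rejection (normalize u) (normalize v) = rejection u v := by
  have hu' : ‖u‖ ≠ 0 := norm_ne_zero_iff.2 hu
  by_cases hv : v = 0
  · simp [hv, rejection]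
  have hv' : ‖v‖ ≠ 0 := norm_ne_zero_iff.2 hv
  simp only [rejection, NormedSpace.norm_normalize hu, one_pow, div_one,
    real_inner_normalize_normalize]
  simp only [NormedSpace.normalize, smul_sub, smul_smul, mul_inv_cancel₀ hv', one_smul]
  congr 2
  field_simp

theorem normalize_rejection_normalize {u v : E} (hu : u ≠ 0) (hv : v ≠ 0) :
    normalize (rejection (normalize u) (normalize v)) = normalize (rejection u v) := by
  rw [← norm_smul_rejection_normalize hu, normalize_smul_of_pos (norm_pos_iff.2 hv)]

theorem rejection_of_norm_eq_one {x : E} (hx : ‖x‖ = 1) (y : E) :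
    rejection x y = y - ⟪x, y⟫ • x := by
  simp [rejection, hx]

theorem norm_rejection_of_norm_eq_one {x y : E} (hx : ‖x‖ = 1) (hy : ‖y‖ = 1) :
    ‖rejection x y‖ = √(1 - ⟪x, y⟫ ^ 2) := by
  rw [← sqrt_sq (norm_nonneg _), rejection_of_norm_eq_one hx, norm_sub_sq_real, norm_smul,
    real_inner_smul_right, hx, hy, norm_eq_abs, mul_one, sq_abs, real_inner_comm]
  ring_nf

theorem normalize_add_normalize_rejection {x y : E} (hx : ‖x‖ = 1) (hy : ‖y‖ = 1)
    (hxy : |⟪x, y⟫| < 1) :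
    normalize (normalize (rejection x y) + normalize (rejection y x)) = normalize (x + y) := by
  have hc1 : 0 < 1 - ⟪x, y⟫ := by linarith [le_abs_self ⟪x, y⟫]
  have hr : 0 < √(1 - ⟪x, y⟫ ^ 2) :=
    sqrt_pos.2 (by nlinarith [abs_nonneg ⟪x, y⟫, sq_abs ⟪x, y⟫])
  have hsum : normalize (rejection x y) + normalize (rejection y x)
      = ((√(1 - ⟪x, y⟫ ^ 2))⁻¹ * (1 - ⟪x, y⟫)) • (x + y) := by
    rw [NormedSpace.normalize, NormedSpace.normalize, norm_rejection_of_norm_eq_one hx hy,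
      norm_rejection_of_norm_eq_one hy hx, rejection_of_norm_eq_one hx,
      rejection_of_norm_eq_one hy, real_inner_comm x y]
    module
  rw [hsum, normalize_smul_of_pos (mul_pos (inv_pos.2 hr) hc1)]

theorem cos_angle_add_left_of_norm_eq_one {x y : E} (hx : ‖x‖ = 1) (hy : ‖y‖ = 1) :
    cos (angle (x + y) x) = √((1 + ⟪x, y⟫) / 2) := by
  have hc : 0 ≤ 1 + ⟪x, y⟫ := by
    nlinarith [abs_le.1 (abs_real_inner_le_norm x y), hx, hy]
  have hsq : ‖x + y‖ = √(2 * (1 + ⟪x, y⟫)) := by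
    rw [← sqrt_sq (norm_nonneg _), norm_add_sq_real, hx, hy]
    ring_nf
  rw [cos_angle, inner_add_left, real_inner_self_eq_norm_sq, hx, one_pow, hsq, real_inner_comm,
    mul_one]
  rcases hc.eq_or_lt with h0 | hpos
  · simp [← h0]
  rw [eq_comm, sqrt_eq_iff_mul_self_eq (by positivity) (div_nonneg hc (sqrt_nonneg _)),
    div_mul_div_comm, mul_self_sqrt (by positivity)]
  field_simp

theorem cos_angle_normalize_add_normalize_left {x y : E} (hx : x ≠ 0) (hy : y ≠ 0) :
    cos (angle (normalize x + normalize y) x) =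
      √((1 + ⟪x, y⟫ / (‖x‖ * ‖y‖)) / 2) := by
  rw [← angle_normalize_right, cos_angle_add_left_of_norm_eq_one (norm_normalize hx)
    (norm_normalize hy), real_inner_normalize_normalize]

end

theorem stmt_16 {E : Type*} [NormedAddCommGroup E] [InnerProductSpace ℝ E]
    (g₁ g₂ : E) (h₁ : g₁ ≠ 0) (h₂ : g₂ ≠ 0)
    (hli : LinearIndependent ℝ ![g₁, g₂]) :
    let O : E → E → E := fun u v => v - (⟪u, v⟫ / ‖u‖ ^ 2) • u
    let U : E → E := fun v => ‖v‖⁻¹ • v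
    let gv : E := U (U (O g₁ g₂) + U (O g₂ g₁))
    ⟪gv, g₁⟫ / (‖gv‖ * ‖g₁‖) = Real.sqrt ((1 + ⟪g₁, g₂⟫ / (‖g₁‖ * ‖g₂‖)) / 2) ∧
    ⟪gv, g₂⟫ / (‖gv‖ * ‖g₂‖) = Real.sqrt ((1 + ⟪g₁, g₂⟫ / (‖g₁‖ * ‖g₂‖)) / 2) := by
  intro O U gv
  have hc : |⟪normalize g₁, normalize g₂⟫| < 1 := by
    rw [real_inner_normalize_normalize]
    exact abs_real_inner_div_norm_mul_norm_lt_one hli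
  have hgv : gv = normalize (normalize g₁ + normalize g₂) := by
    change normalize (normalize (rejection g₁ g₂) + normalize (rejection g₂ g₁)) = _
    rw [← normalize_rejection_normalize h₁ h₂, ← normalize_rejection_normalize h₂ h₁,
      normalize_add_normalize_rejection (norm_normalize h₁) (norm_normalize h₂) hc]
  constructor
  · rw [← cos_angle, hgv, angle_normalize_left, cos_angle_normalize_add_normalize_left h₁ h₂]
  · rw [← cos_angle, hgv, angle_normalize_left, add_comm,
      cos_angle_normalize_add_normalize_left h₂ h₁, real_inner_comm, mul_comm]
end
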